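/- Let ψ: M^n → ℝ^d be an isometric immersion with induced metric g, let G_{(q)} be the q-th Lovelock tensor of g (assumed divergence-free), and let Y = ψ*Z̄^⊤ be the tangential part of the ambient position field. Then div_g(ι_Y G_{(q)}) = −((2q)!/2)[(n−2q) S_{(2q)} + (2q+1)⟨S_{(2q+1)}, Z̄⟩]. -/

import Mathlib

/-!
Contract the Leibniz rule `∇(ι_Y G) = ι_Y ∇G + G(∇Y)` with `g⁻¹`: the first term vanishes because
`G_{(q)}` is divergence-free. By the Gauss equation, each curvature factor of `G^i_l` is an
antisymmetrized product of two second fundamental forms, and the antisymmetry of the generalized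
Kronecker delta absorbs the antisymmetrization, so `G^i_l = -½ F^i_l` with `F = (2q)! T_{(2q)}`.
Raising its second index makes `F` symmetric (the lowered second fundamental form is symmetric), so
only the symmetric part `½ L_Y g = g + ⟨B, Z̄⟩` of `∇Y` survives. The `g` part gives the trace of
`F`, which contracting one index pair of the Kronecker delta turns into `(n - 2q)(2q)! S_{(2q)}`;
the `B` part is, after a cyclic relabelling, `(2q+1)! ⟨S_{(2q+1)}, Z̄⟩`.
-/

open scoped BigOperators RealInnerProductSpace

/-- Generalized Kronecker delta `δ^{a_1…a_k}_{b_1…b_k}`. -/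
noncomputable def gkd {n k : ℕ} (a b : Fin k → Fin n) : ℝ :=
  Matrix.det (Matrix.of fun i j => if a i = b j then (1 : ℝ) else 0)

/-- First member of the `s`-th index pair. -/
def pr1 {q : ℕ} (s : Fin q) : Fin (2 * q) := ⟨2 * s.1, by have := s.2; omega⟩

/-- Second member of the `s`-th index pair. -/
def pr2 {q : ℕ} (s : Fin q) : Fin (2 * q) := ⟨2 * s.1 + 1, by have := s.2; omega⟩

open Finset

section Pairing

variable {q : ℕ}

lemma pr1_ne_pr2 (s t : Fin q) : pr1 s ≠ pr2 t := by
  simp only [pr1, pr2, Fin.ext_iff, ne_eq]; omega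

lemma pr1_injective : Function.Injective (pr1 (q := q)) := fun s t h => by
  simp only [pr1, Fin.ext_iff] at h ⊢; omega

lemma pr2_injective : Function.Injective (pr2 (q := q)) := fun s t h => by
  simp only [pr2, Fin.ext_iff] at h ⊢; omega

def pairIndex (q : ℕ) : Fin q × Fin 2 ≃ Fin (2 * q) :=
  finProdFinEquiv.trans (finCongr (mul_comm q 2))

@[simp] lemma pairIndex_zero (s : Fin q) : pairIndex q (s, 0) = pr1 s := by
  ext; simp [pairIndex, pr1]

@[simp] lemma pairIndex_one (s : Fin q) : pairIndex q (s, 1) = pr2 s := by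
  ext; simp [pairIndex, pr2]; ring

lemma prod_pairs {M : Type*} [CommMonoid M] (f : Fin (2 * q) → M) :
    ∏ t, f t = ∏ s, f (pr1 s) * f (pr2 s) := by
  rw [← (pairIndex q).prod_comp, Fintype.prod_prod_type]
  simp [Fin.prod_univ_two]

def pairEquiv (q : ℕ) (α : Type*) : (Fin q → α × α) ≃ (Fin (2 * q) → α) :=
  (Equiv.piCongrRight fun _ => (piFinTwoEquiv fun _ => α).symm).trans <|
    (Equiv.curry _ _ _).symm.trans (Equiv.arrowCongr (pairIndex q) (Equiv.refl α))

@[simp] lemma pairEquiv_apply_pr1 {α : Type*} (C : Fin q → α × α) (s : Fin q) :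
    pairEquiv q α C (pr1 s) = (C s).1 := by
  simp [pairEquiv, ← pairIndex_zero]

@[simp] lemma pairEquiv_apply_pr2 {α : Type*} (C : Fin q → α × α) (s : Fin q) :
    pairEquiv q α C (pr2 s) = (C s).2 := by
  simp [pairEquiv, ← pairIndex_one]

lemma prod_sum_sum_eq_sum_pairs {R α : Type*} [CommSemiring R] [Fintype α]
    (F : Fin q → α → α → R) :
    ∏ s, ∑ x, ∑ y, F s x y = ∑ c : Fin (2 * q) → α, ∏ s, F s (c (pr1 s)) (c (pr2 s)) := by
  simp_rw [← Fintype.sum_prod_type', Fintype.prod_sum, ← (pairEquiv q α).sum_comp]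
  simp

end Pairing

section Tuples

variable {k : ℕ} {α M : Type*} [Fintype α] [AddCommMonoid M]

lemma sum_fin_succ_fun_cons (f : (Fin (k + 1) → α) → M) :
    ∑ v, f v = ∑ x, ∑ a : Fin k → α, f (Fin.cons x a) := by
  rw [← (Fin.consEquiv fun _ => α).sum_comp, Fintype.sum_prod_type]
  rfl

lemma sum_fin_succ_fun_snoc (f : (Fin (k + 1) → α) → M) :
    ∑ v, f v = ∑ x, ∑ a : Fin k → α, f (Fin.snoc a x) := by
  rw [← (Fin.snocEquiv fun _ => α).sum_comp, Fintype.sum_prod_type]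
  rfl

end Tuples

section KroneckerDelta

open Equiv Equiv.Perm

variable {n k : ℕ}

lemma gkd_eq_sum_perm (u v : Fin k → Fin n) :
    gkd u v = ∑ σ : Perm (Fin k), ((sign σ : ℤ) : ℝ) * if u ∘ σ = v then 1 else 0 := by
  rw [gkd, Matrix.det_apply']
  refine sum_congr rfl fun σ _ => ?_
  simp [Fintype.prod_boole, funext_iff]

lemma gkd_comp_perm (u v : Fin k → Fin n) (σ : Perm (Fin k)) :
    gkd (u ∘ σ) (v ∘ σ) = gkd u v := by
  simpa [Matrix.submatrix, gkd] using
    Matrix.det_submatrix_equiv_self σ (Matrix.of fun i j => if u i = v j then (1 : ℝ) else 0)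

lemma gkd_comp_swap_right (u v : Fin k → Fin n) {p r : Fin k} (hpr : p ≠ r) :
    gkd u (v ∘ swap p r) = -gkd u v := by
  simpa [Matrix.submatrix, gkd, sign_swap hpr] using
    Matrix.det_permute' (swap p r) (Matrix.of fun i j => if u i = v j then (1 : ℝ) else 0)

lemma gkd_snoc_snoc (b a : Fin k → Fin n) (x y : Fin n) :
    gkd (Fin.snoc b x : Fin (k + 1) → Fin n) (Fin.snoc a y)
      = gkd (Fin.cons x b) (Fin.cons y a) := by
  rw [Fin.snoc_eq_cons_rotate, Fin.snoc_eq_cons_rotate]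
  exact gkd_comp_perm _ _ (finRotate (k + 1))

lemma sum_gkd_mul_prod (M : Matrix (Fin n) (Fin n) ℝ) (u w : Fin k → Fin n) :
    ∑ v : Fin k → Fin n, gkd u v * ∏ s, M (v s) (w s) = (M.submatrix u w).det := by
  simp_rw [Matrix.det_apply', gkd_eq_sum_perm, sum_mul, mul_assoc, ite_mul, one_mul, zero_mul]
  rw [sum_comm]
  refine sum_congr rfl fun σ _ => ?_
  simp [Matrix.submatrix]

lemma sum_cons_comp_decomposeFin_symm_eq (b a : Fin k → Fin n) (p : Fin (k + 1))
    (e : Perm (Fin k)) :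
    (∑ x : Fin n, if (Fin.cons x b : Fin (k + 1) → Fin n) ∘ decomposeFin.symm (p, e)
        = Fin.cons x a then (1 : ℝ) else 0)
      = (if p = 0 then (n : ℝ) else 1) * if b ∘ e = a then 1 else 0 := by
  induction p using Fin.cases with
  | zero =>
    have h (x : Fin n) : (Fin.cons x b : Fin (k + 1) → Fin n) ∘ decomposeFin.symm (0, e)
        = Fin.cons x (b ∘ e) := by
      ext s; induction s using Fin.cases <;> simp
    simp [h, Fin.cons_inj]
  | succ t =>
    -- `σ` sends `0` to `t.succ`, forcing `x = b t`; the swap in `σ` then exchanges equal entries.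
    have h (x : Fin n) : (Fin.cons x b : Fin (k + 1) → Fin n) ∘ decomposeFin.symm (t.succ, e)
        = Fin.cons x a ↔ b t = x ∧ b ∘ e = a := by
      rw [funext_iff, Fin.forall_fin_succ]
      simp only [Function.comp_apply, decomposeFin_symm_apply_zero, decomposeFin_symm_apply_succ,
        Fin.cons_succ, Fin.cons_zero, funext_iff]
      refine and_congr_right fun hx => forall_congr' fun s => ?_
      subst hx
      rw [apply_swap_eq_self (v := (Fin.cons (b t) b : Fin (k + 1) → Fin n)) (by simp),
        Fin.cons_succ]
    simp [h, ite_and, Fin.succ_ne_zero]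

lemma sum_gkd_cons_cons (b a : Fin k → Fin n) :
    ∑ x : Fin n, gkd (Fin.cons x b : Fin (k + 1) → Fin n) (Fin.cons x a)
      = ((n : ℝ) - k) * gkd b a := by
  calc ∑ x : Fin n, gkd (Fin.cons x b : Fin (k + 1) → Fin n) (Fin.cons x a)
      = ∑ p : Fin (k + 1), ∑ e : Perm (Fin k), ((sign (decomposeFin.symm (p, e)) : ℤ) : ℝ) *
          ∑ x : Fin n, if (Fin.cons x b : Fin (k + 1) → Fin n) ∘ decomposeFin.symm (p, e)
            = Fin.cons x a then 1 else 0 := by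
        simp_rw [gkd_eq_sum_perm, mul_sum]
        rw [sum_comm, ← decomposeFin.symm.sum_comp, Fintype.sum_prod_type]
    _ = ∑ p : Fin (k + 1), (if p = 0 then (n : ℝ) else -1) * gkd b a := by
        simp_rw [sum_cons_comp_decomposeFin_symm_eq, gkd_eq_sum_perm, mul_sum]
        refine sum_congr rfl fun p _ => sum_congr rfl fun e _ => ?_
        split_ifs <;> simp [*, mul_comm]
    _ = ((n : ℝ) - k) * gkd b a := by
        rw [← sum_mul, Fin.sum_univ_succ]
        simp only [if_true, Fin.succ_ne_zero, if_false, sum_const, card_univ, Fintype.card_fin,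
          nsmul_eq_mul]
        ring

lemma gkd_cons_comp_swap (u : Fin (k + 1) → Fin n) (x : Fin n) (a : Fin k → Fin n)
    {p r : Fin k} (hpr : p ≠ r) :
    gkd u (Fin.cons x (a ∘ swap p r)) = -gkd u (Fin.cons x a) := by
  have h : (Fin.cons x (a ∘ swap p r) : Fin (k + 1) → Fin n)
      = Fin.cons x a ∘ swap p.succ r.succ := by
    ext t
    induction t using Fin.cases with
    | zero => simp [swap_apply_of_ne_of_ne (Fin.succ_ne_zero p).symm (Fin.succ_ne_zero r).symm]
    | succ t => simp [(Fin.succ_injective k).swap_apply]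
  rw [h, gkd_comp_swap_right _ _ (by simpa using hpr)]

end KroneckerDelta

section Antisymmetrization

open Equiv

variable {q : ℕ} {α : Type*} [Fintype α]

lemma sum_mul_comp_swap_of_antisymm {φ : (Fin (2 * q) → α) → ℝ} {p r : Fin (2 * q)}
    (hφ : ∀ a, φ (a ∘ swap p r) = -φ a) (G : (Fin (2 * q) → α) → ℝ) :
    ∑ a, φ a * G (a ∘ swap p r) = -∑ a, φ a * G a := by
  rw [← (Equiv.arrowCongr (swap p r) (Equiv.refl α)).sum_comp, ← sum_neg_distrib]
  refine sum_congr rfl fun a _ => ?_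
  have ha : ((Equiv.arrowCongr (swap p r) (Equiv.refl α)) a) = a ∘ swap p r := by
    ext; simp [Equiv.arrowCongr_apply]
  have hinv : (a ∘ swap p r) ∘ swap p r = a := by ext; simp
  simp [ha, hφ, hinv]

lemma swap_pair_apply_of_ne {s t : Fin q} (h : s ≠ t) :
    swap (pr1 t) (pr2 t) (pr1 s) = pr1 s ∧ swap (pr1 t) (pr2 t) (pr2 s) = pr2 s :=
  ⟨swap_apply_of_ne_of_ne (fun e => h (pr1_injective e)) (pr1_ne_pr2 s t),
    swap_apply_of_ne_of_ne (pr1_ne_pr2 t s).symm (fun e => h (pr2_injective e))⟩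

lemma sum_mul_prod_sub_swap {φ : (Fin (2 * q) → α) → ℝ}
    (hφ : ∀ s a, φ (a ∘ swap (pr1 s) (pr2 s)) = -φ a) (U : Fin q → α → α → ℝ) :
    ∑ a, φ a * ∏ s, (U s (a (pr1 s)) (a (pr2 s)) - U s (a (pr2 s)) (a (pr1 s)))
      = 2 ^ q * ∑ a, φ a * ∏ s, U s (a (pr1 s)) (a (pr2 s)) := by
  set V : Fin q → (Fin (2 * q) → α) → ℝ := fun s a => U s (a (pr1 s)) (a (pr2 s))
  set D : Fin q → (Fin (2 * q) → α) → ℝ := fun s a => V s a - V s (a ∘ swap (pr1 s) (pr2 s))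
  suffices h : ∀ T : Finset (Fin q),
      ∑ a, φ a * ∏ s, (if s ∈ T then D s a else V s a) = 2 ^ #T * ∑ a, φ a * ∏ s, V s a by
    simpa [D, V] using h univ
  intro T
  induction T using Finset.induction_on with
  | empty => simp
  | @insert s₀ T hs₀ ih =>
    set P : (Fin (2 * q) → α) → ℝ := fun a => ∏ s ∈ univ.erase s₀, if s ∈ T then D s a else V s a
    have hP : ∀ a, P (a ∘ swap (pr1 s₀) (pr2 s₀)) = P a := fun a =>
      prod_congr rfl fun s hs => by
        obtain ⟨h1, h2⟩ := swap_pair_apply_of_ne (ne_of_mem_erase hs)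
        simp [D, V, Function.comp_def, h1, h2]
    calc ∑ a, φ a * ∏ s, (if s ∈ insert s₀ T then D s a else V s a)
        = ∑ a, φ a * (D s₀ a * P a) := by
          refine sum_congr rfl fun a _ => ?_
          rw [← mul_prod_erase univ _ (mem_univ s₀), if_pos (mem_insert_self s₀ T)]
          congr 2
          refine prod_congr rfl fun s hs => ?_
          simp only [mem_insert, ne_of_mem_erase hs, false_or]
      _ = 2 * ∑ a, φ a * (V s₀ a * P a) := by
          have hodd := sum_mul_comp_swap_of_antisymm (hφ s₀) (fun a => V s₀ a * P a)
          simp only [hP] at hodd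
          simp only [D, sub_mul, mul_sub, sum_sub_distrib, hodd]
          ring
      _ = 2 * ∑ a, φ a * ∏ s, (if s ∈ T then D s a else V s a) := by
          simp only [← mul_prod_erase univ _ (mem_univ s₀), if_neg hs₀, P]
      _ = 2 ^ #(insert s₀ T) * ∑ a, φ a * ∏ s, V s a := by
          rw [ih, card_insert_of_notMem hs₀, pow_succ]
          ring

end Antisymmetrization

section SecondFundamentalForm

variable {n q : ℕ} {W : Type*} [NormedAddCommGroup W] [InnerProductSpace ℝ W]

noncomputable def pairInner (V : Fin n → Fin n → W) (a b : Fin (2 * q) → Fin n) : ℝ :=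
  ∏ s : Fin q, ⟪V (a (pr1 s)) (b (pr1 s)), V (a (pr2 s)) (b (pr2 s))⟫

/-- `(2q)!` times the Newton tensor `T_{(2q)}` with its first index raised. -/
noncomputable def newtonTensor (q : ℕ) (Bm : Fin n → Fin n → W) : Matrix (Fin n) (Fin n) ℝ :=
  Matrix.of fun i l => ∑ a : Fin (2 * q) → Fin n, ∑ b : Fin (2 * q) → Fin n,
    gkd (Fin.cons i b : Fin (2 * q + 1) → Fin n) (Fin.cons l a) * pairInner Bm a b

lemma pairInner_comm {V : Fin n → Fin n → W} (hV : ∀ i j, V i j = V j i)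
    (a b : Fin (2 * q) → Fin n) : pairInner V a b = pairInner V b a := by
  simp only [pairInner, hV (a _)]

lemma inner_raise_raise (ginv : Matrix (Fin n) (Fin n) ℝ) {Blow Bm : Fin n → Fin n → W}
    (hBm : ∀ a b, Bm a b = ∑ c, ginv a c • Blow c b) (a b a' b' : Fin n) :
    ⟪Bm a b, Bm a' b'⟫ = ∑ c, ∑ c', ginv a c * ginv a' c' * ⟪Blow c b, Blow c' b'⟫ := by
  rw [hBm, hBm, sum_inner]
  refine sum_congr rfl fun c _ => ?_
  rw [real_inner_smul_left, inner_sum, mul_sum]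
  refine sum_congr rfl fun c' _ => ?_
  rw [real_inner_smul_right]
  ring

lemma pairInner_raise (ginv : Matrix (Fin n) (Fin n) ℝ) {Blow Bm : Fin n → Fin n → W}
    (hBm : ∀ a b, Bm a b = ∑ c, ginv a c • Blow c b) (a b : Fin (2 * q) → Fin n) :
    pairInner Bm a b = ∑ c : Fin (2 * q) → Fin n, (∏ t, ginv (a t) (c t)) * pairInner Blow c b := by
  simp_rw [pairInner, inner_raise_raise ginv hBm, prod_sum_sum_eq_sum_pairs, prod_pairs,
    ← prod_mul_distrib]

lemma newtonTensor_mul_apply (ginv : Matrix (Fin n) (Fin n) ℝ) {Blow Bm : Fin n → Fin n → W}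
    (hBm : ∀ a b, Bm a b = ∑ c, ginv a c • Blow c b) (i m : Fin n) :
    (newtonTensor q Bm * ginv) i m
      = ∑ b : Fin (2 * q) → Fin n, ∑ c : Fin (2 * q) → Fin n,
          (ginv.submatrix (Fin.cons i b : Fin (2 * q + 1) → Fin n) (Fin.cons m c)).det *
            pairInner Blow c b := by
  simp_rw [← sum_gkd_mul_prod, sum_fin_succ_fun_cons, Fin.prod_univ_succ, Fin.cons_zero,
    Fin.cons_succ, Matrix.mul_apply, newtonTensor, Matrix.of_apply, pairInner_raise ginv hBm,
    mul_sum, sum_mul]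
  conv_lhs => rw [sum_comm_cycle]
  refine sum_congr rfl fun b _ => ?_
  conv_lhs => rw [sum_comm_cycle]
  exact sum_congr rfl fun c _ => sum_congr rfl fun l _ => sum_congr rfl fun a _ => by ring

lemma isSymm_newtonTensor_mul {ginv : Matrix (Fin n) (Fin n) ℝ} (hginv : ginv.IsSymm)
    {Blow Bm : Fin n → Fin n → W} (hBlow : ∀ i j, Blow i j = Blow j i)
    (hBm : ∀ a b, Bm a b = ∑ c, ginv a c • Blow c b) :
    (newtonTensor q Bm * ginv).IsSymm := by
  refine Matrix.IsSymm.ext fun i m => ?_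
  rw [newtonTensor_mul_apply ginv hBm, newtonTensor_mul_apply ginv hBm, sum_comm]
  refine sum_congr rfl fun c _ => sum_congr rfl fun b _ => ?_
  rw [pairInner_comm hBlow, ← Matrix.det_transpose, Matrix.transpose_submatrix, hginv.eq]

lemma trace_newtonTensor (Bm : Fin n → Fin n → W) :
    (newtonTensor q Bm).trace
      = ((n : ℝ) - 2 * q) * ∑ a : Fin (2 * q) → Fin n, ∑ b, gkd b a * pairInner Bm a b := by
  simp only [Matrix.trace, Matrix.diag_apply, newtonTensor, Matrix.of_apply]
  rw [mul_sum, sum_comm]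
  refine sum_congr rfl fun a _ => ?_
  rw [sum_comm, mul_sum]
  refine sum_congr rfl fun b _ => ?_
  rw [← sum_mul, sum_gkd_cons_cons]
  push_cast
  ring

lemma sum_newtonTensor_smul (Bm : Fin n → Fin n → W) :
    ∑ i, ∑ l, newtonTensor q Bm i l • Bm l i
      = ∑ a : Fin (2 * q + 1) → Fin n, ∑ b : Fin (2 * q + 1) → Fin n,
          (gkd b a * ∏ s : Fin q,
            ⟪Bm (a (pr1 s).castSucc) (b (pr1 s).castSucc),
              Bm (a (pr2 s).castSucc) (b (pr2 s).castSucc)⟫) •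
          Bm (a (Fin.last (2 * q))) (b (Fin.last (2 * q))) := by
  simp_rw [sum_fin_succ_fun_snoc, Fin.snoc_castSucc, Fin.snoc_last, gkd_snoc_snoc,
    newtonTensor, Matrix.of_apply, sum_smul]
  rw [sum_comm]
  refine sum_congr rfl fun l _ => ?_
  rw [sum_comm]
  rfl

lemma sum_mul_ginv_mul_inner {ginv : Matrix (Fin n) (Fin n) ℝ} (hginv : ginv.IsSymm)
    {Blow Bm : Fin n → Fin n → W} (hBlow : ∀ i j, Blow i j = Blow j i)
    (hBm : ∀ a b, Bm a b = ∑ c, ginv a c • Blow c b) (F : Matrix (Fin n) (Fin n) ℝ) (Z : W) :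
    ∑ i, ∑ m, (F * ginv) i m * ⟪Blow i m, Z⟫ = ⟪∑ i, ∑ l, F i l • Bm l i, Z⟫ := by
  simp_rw [sum_inner, real_inner_smul_left, hBm, sum_inner, real_inner_smul_left, mul_sum,
    Matrix.mul_apply, sum_mul]
  refine sum_congr rfl fun i _ => ?_
  rw [sum_comm]
  refine sum_congr rfl fun l _ => sum_congr rfl fun m _ => ?_
  rw [hginv.apply, hBlow]
  ring

lemma rmix_eq_inner_sub_inner {ginv : Matrix (Fin n) (Fin n) ℝ} (hginv : ginv.IsSymm)
    {Blow Bm : Fin n → Fin n → W} (hBlow : ∀ i j, Blow i j = Blow j i)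
    (hBm : ∀ a b, Bm a b = ∑ c, ginv a c • Blow c b)
    {Rlow Rmix : Fin n → Fin n → Fin n → Fin n → ℝ}
    (hGauss : ∀ i j k l, Rlow i j k l = ⟪Blow i k, Blow j l⟫ - ⟪Blow i l, Blow j k⟫)
    (hRmix : ∀ a b c d, Rmix a b c d = ∑ e, ∑ f, Rlow a b e f * ginv e c * ginv f d)
    (a b c d : Fin n) :
    Rmix a b c d = ⟪Bm c a, Bm d b⟫ - ⟪Bm d a, Bm c b⟫ := by
  rw [hRmix, inner_raise_raise ginv hBm, inner_raise_raise ginv hBm]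
  simp_rw [hGauss, sub_mul, sum_sub_distrib]
  congr 1
  · refine sum_congr rfl fun e _ => sum_congr rfl fun f _ => ?_
    rw [hginv.apply, hginv.apply d, hBlow a, hBlow b]
    ring
  · rw [sum_comm]
    refine sum_congr rfl fun f _ => sum_congr rfl fun e _ => ?_
    rw [hginv.apply d f, hginv.apply c e, hBlow a, hBlow b]
    ring

lemma sum_gkd_mul_prod_rmix {Bm : Fin n → Fin n → W} {Rmix : Fin n → Fin n → Fin n → Fin n → ℝ}
    (hR : ∀ a b c d, Rmix a b c d = ⟪Bm c a, Bm d b⟫ - ⟪Bm d a, Bm c b⟫) (k l : Fin n) :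
    ∑ a : Fin (2 * q) → Fin n, ∑ b : Fin (2 * q) → Fin n,
        gkd (Fin.cons k b : Fin (2 * q + 1) → Fin n) (Fin.cons l a) *
        ∏ s : Fin q, Rmix (b (pr1 s)) (b (pr2 s)) (a (pr1 s)) (a (pr2 s))
      = 2 ^ q * newtonTensor q Bm k l := by
  rw [newtonTensor, Matrix.of_apply, sum_comm]
  conv_rhs => rw [sum_comm, mul_sum]
  refine sum_congr rfl fun b _ => ?_
  simp only [hR]
  exact sum_mul_prod_sub_swap
    (φ := fun a => gkd (Fin.cons k b : Fin (2 * q + 1) → Fin n) (Fin.cons l a))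
    (fun s a => gkd_cons_comp_swap _ _ _ (pr1_ne_pr2 s s))
    fun s x y => ⟪Bm x (b (pr1 s)), Bm y (b (pr2 s))⟫

lemma ginv_mul_lovelock {g ginv G : Matrix (Fin n) (Fin n) ℝ} (hginv : ginv * g = 1)
    {Bm : Fin n → Fin n → W} {Rmix : Fin n → Fin n → Fin n → Fin n → ℝ}
    (hR : ∀ a b c d, Rmix a b c d = ⟪Bm c a, Bm d b⟫ - ⟪Bm d a, Bm c b⟫)
    (hG : ∀ i j, G i j = -(1 / 2 ^ (q + 1)) * ∑ k, g i k *
      ∑ a : Fin (2 * q) → Fin n, ∑ b : Fin (2 * q) → Fin n,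
        gkd (Fin.cons k b : Fin (2 * q + 1) → Fin n) (Fin.cons j a) *
        ∏ s : Fin q, Rmix (b (pr1 s)) (b (pr2 s)) (a (pr1 s)) (a (pr2 s))) :
    ginv * G = -(1 / 2 : ℝ) • newtonTensor q Bm := by
  have hGF : G = (-(1 / 2 ^ (q + 1)) * 2 ^ q : ℝ) • (g * newtonTensor q Bm) := by
    ext i j
    simp only [hG, sum_gkd_mul_prod_rmix hR, Matrix.smul_apply, Matrix.mul_apply, smul_eq_mul,
      mul_sum]
    exact sum_congr rfl fun k _ => by ring
  rw [hGF, Matrix.mul_smul, ← Matrix.mul_assoc, hginv, Matrix.one_mul, pow_succ]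
  congr 1
  field_simp

end SecondFundamentalForm

section Contraction

variable {ι : Type*} [Fintype ι]

lemma sum_ginv_mul_leibniz {ginv G : Matrix ι ι ℝ} {DG : ι → ι → ι → ℝ}
    (hdiv : ∀ j, ∑ i, ∑ k, ginv i k * DG i k j = 0) {Y : ι → ℝ} {DY Dω : ι → ι → ℝ}
    (hLeibniz : ∀ i j, Dω i j = (∑ l, DG i j l * Y l) + ∑ l, G j l * DY i l) :
    ∑ i, ∑ j, ginv i j * Dω i j = ∑ i, ∑ l, (ginv * G) i l * DY i l := by
  have hvanish : ∑ i, ∑ j, ginv i j * ∑ l, DG i j l * Y l = 0 := by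
    simp_rw [mul_sum, ← mul_assoc]
    rw [sum_comm_cycle]
    simp [← sum_mul, hdiv]
  simp_rw [hLeibniz, mul_add, sum_add_distrib, hvanish, zero_add, Matrix.mul_apply, sum_mul,
    mul_sum]
  refine sum_congr rfl fun i _ => ?_
  rw [sum_comm]
  exact sum_congr rfl fun l _ => sum_congr rfl fun j _ => by ring

lemma sum_mul_eq_trace_add_of_isSymm [DecidableEq ι] {F g ginv D S : Matrix ι ι ℝ}
    (hg : g.IsSymm) (hginv : ginv * g = 1) (hH : (F * ginv).IsSymm)
    (hD : ∀ i j, (∑ m, g j m * D i m) + (∑ m, g i m * D j m) = 2 * g i j + 2 * S i j) :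
    ∑ i, ∑ l, F i l * D i l = F.trace + ∑ i, ∑ m, (F * ginv) i m * S i m := by
  set H := F * ginv
  set K : Matrix ι ι ℝ := Matrix.of fun i m => ∑ l, g m l * D i l
  have hF : H * g = F := by rw [Matrix.mul_assoc, hginv, Matrix.mul_one]
  have hFK : ∑ i, ∑ l, F i l * D i l = ∑ i, ∑ m, H i m * K i m := by
    conv_lhs => rw [← hF]
    simp_rw [K, Matrix.of_apply, Matrix.mul_apply, sum_mul, mul_sum]
    refine sum_congr rfl fun i _ => ?_
    rw [sum_comm]
    exact sum_congr rfl fun m _ => sum_congr rfl fun l _ => by ring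
  have hKt : ∑ i, ∑ m, H i m * K m i = ∑ i, ∑ m, H i m * K i m := by
    rw [sum_comm]
    simp_rw [hH.apply]
  have hHg : ∑ i, ∑ m, H i m * g i m = F.trace := by
    simp_rw [← hF, Matrix.trace, Matrix.diag_apply, Matrix.mul_apply, hg.apply]
  have hsum : ∑ i, ∑ m, H i m * (K i m + K m i)
      = 2 * ∑ i, ∑ m, H i m * g i m + 2 * ∑ i, ∑ m, H i m * S i m := by
    simp_rw [K, Matrix.of_apply, hD, mul_sum, ← sum_add_distrib]
    exact sum_congr rfl fun i _ => sum_congr rfl fun m _ => by ring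
  simp_rw [mul_add, sum_add_distrib, hKt, hHg] at hsum
  linarith

end Contraction

theorem div_lovelock_contraction_with_tangential_position_general (n q d : ℕ)
    (g ginv : Matrix (Fin n) (Fin n) ℝ)
    (hgsym : ∀ i j, g i j = g j i)
    (hinv' : ∀ i j, (∑ k, ginv i k * g k j) = if i = j then (1 : ℝ) else 0)
    (W : Type) [NormedAddCommGroup W] [InnerProductSpace ℝ W]
    (Blow : Fin n → Fin n → W)
    (hBsym : ∀ i j, Blow i j = Blow j i)
    (Bm : Fin n → Fin n → W)
    (hBm : ∀ a b, Bm a b = ∑ c, ginv a c • Blow c b)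
    (Zbar : W)
    (Rlow : Fin n → Fin n → Fin n → Fin n → ℝ)
    (hGauss : ∀ i j k l, Rlow i j k l = ⟪Blow i k, Blow j l⟫ - ⟪Blow i l, Blow j k⟫)
    (Rmix : Fin n → Fin n → Fin n → Fin n → ℝ)   -- Rmix a b c d = R_{ab}^{cd}
    (hRmix : ∀ a b c d, Rmix a b c d = ∑ e, ∑ f, Rlow a b e f * ginv e c * ginv f d)
    (G : Matrix (Fin n) (Fin n) ℝ)
    (hG : ∀ i j, G i j = -(1 / 2 ^ (q + 1)) * ∑ k, g i k *
      ∑ a : Fin (2 * q) → Fin n, ∑ b : Fin (2 * q) → Fin n,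
        gkd (Fin.cons k b : Fin (2 * q + 1) → Fin n) (Fin.cons j a) *
        ∏ s : Fin q, Rmix (b (pr1 s)) (b (pr2 s)) (a (pr1 s)) (a (pr2 s)))
    (DG : Fin n → Fin n → Fin n → ℝ)             -- DG k i j = ∇_k G_{(q)ij}
    (hdivfree : ∀ j, (∑ i, ∑ k, ginv i k * DG i k j) = 0)
    (Yup : Fin n → ℝ)                            -- Y^l
    (DYup : Fin n → Fin n → ℝ)                   -- DYup i l = ∇_i Y^l
    (hLie : ∀ i j, (∑ m, g j m * DYup i m) + (∑ m, g i m * DYup j m)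
      = 2 * g i j + 2 * ⟪Blow i j, Zbar⟫)
    (Dω : Fin n → Fin n → ℝ)                     -- Dω i j = ∇_i ω_j, ω = ι_Y G_{(q)}
    (hLeibniz : ∀ i j, Dω i j =
      (∑ l, DG i j l * Yup l) + ∑ l, G j l * DYup i l)
    (S2q : ℝ)
    (hS2q : S2q = (1 / ((2 * q).factorial : ℝ)) *
      ∑ a : Fin (2 * q) → Fin n, ∑ b : Fin (2 * q) → Fin n,
        gkd b a * ∏ s : Fin q,
          ⟪Bm (a (pr1 s)) (b (pr1 s)), Bm (a (pr2 s)) (b (pr2 s))⟫)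
    (Svec : W)
    (hSvec : Svec = (1 / ((2 * q + 1).factorial : ℝ)) •
      ∑ a : Fin (2 * q + 1) → Fin n, ∑ b : Fin (2 * q + 1) → Fin n,
        (gkd b a * ∏ s : Fin q,
            ⟪Bm (a (pr1 s).castSucc) (b (pr1 s).castSucc),
              Bm (a (pr2 s).castSucc) (b (pr2 s).castSucc)⟫) •
          Bm (a (Fin.last (2 * q))) (b (Fin.last (2 * q)))) :
    -- div_g(ι_Y G_{(q)}) = −((2q)!/2)[(n−2q) S_{(2q)} + (2q+1)⟨S_{(2q+1)}, Z̄⟩]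
    (∑ i, ∑ j, ginv i j * Dω i j)
      = -(((2 * q).factorial : ℝ) / 2) *
          (((n : ℝ) - 2 * q) * S2q + (2 * q + 1) * ⟪Svec, Zbar⟫) := by
  have hginv : ginv * g = 1 := by
    ext i j
    simpa [Matrix.mul_apply, Matrix.one_apply] using hinv' i j
  have hg : g.IsSymm := Matrix.IsSymm.ext fun i j => hgsym j i
  have hginv_symm : ginv.IsSymm := Matrix.inv_eq_left_inv hginv ▸ hg.inv
  have hR := rmix_eq_inner_sub_inner hginv_symm hBsym hBm hGauss hRmix
  have hS2q' : ((2 * q).factorial : ℝ) * S2q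
      = ∑ a : Fin (2 * q) → Fin n, ∑ b, gkd b a * pairInner Bm a b := by
    rw [hS2q, ← mul_assoc, mul_one_div_cancel (by positivity), one_mul]
    rfl
  have hSvec' : ((2 * q + 1).factorial : ℝ) • Svec = ∑ i, ∑ l, newtonTensor q Bm i l • Bm l i := by
    rw [hSvec, smul_smul, mul_one_div_cancel (by positivity), one_smul, sum_newtonTensor_smul]
  calc ∑ i, ∑ j, ginv i j * Dω i j
      = ∑ i, ∑ l, (ginv * G) i l * DYup i l := sum_ginv_mul_leibniz hdivfree hLeibniz
    _ = -(1 / 2) * ∑ i, ∑ l, newtonTensor q Bm i l * DYup i l := by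
        simp [ginv_mul_lovelock hginv hR hG, mul_sum, mul_assoc]
    _ = -(1 / 2) * ((newtonTensor q Bm).trace
          + ∑ i, ∑ m, (newtonTensor q Bm * ginv) i m * ⟪Blow i m, Zbar⟫) := by
        rw [sum_mul_eq_trace_add_of_isSymm hg hginv
          (isSymm_newtonTensor_mul hginv_symm hBsym hBm) hLie]
    _ = -(1 / 2) * (((n : ℝ) - 2 * q) * (((2 * q).factorial : ℝ) * S2q)
          + ⟪((2 * q + 1).factorial : ℝ) • Svec, Zbar⟫) := by
        rw [trace_newtonTensor, sum_mul_ginv_mul_inner hginv_symm hBsym hBm, hS2q', hSvec']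
    _ = _ := by
        rw [real_inner_smul_left, Nat.factorial_succ]
        push_cast
        ring

/-- for an isometric immersion `ψ : M^n → ℝ^d` with induced metric `g`,
`q`-th (divergence-free) Lovelock tensor `G_{(q)}` and `Y = ψ*Z̄^⊤` the tangential part of
the ambient position field, one has
`div_g(ι_Y G_{(q)}) = −((2q)!/2)[(n−2q) S_{(2q)} + (2q+1)⟨S_{(2q+1)}, Z̄⟩]`.

Formalized pointwise in coordinates at an arbitrary point.  Data: `g`, `ginv` the metric
and inverse; `W` the ambient/normal inner-product space; `Blow` the symmetric
normal-valued second fundamental form, `Bm a b = B^a_b`; `Zbar ∈ W` the ambient position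
vector `Z̄` at the point; `Rlow` the Riemann tensor given by the Gauss equation; `G` the
`q`-th Lovelock tensor built from the mixed Riemann tensor `Rmix`;
`DG k i j = ∇_k G_{(q)ij}` its covariant derivative, with `hdivfree : ∇^i G_{(q)ij} = 0`;
`Yup`, `DYup i l = ∇_i Y^l` the components of `Y` and their covariant derivatives, with
`hLie : (L_Y g)_{ij} = ∇_i Y_j + ∇_j Y_i = 2 g_{ij} + 2⟨B_{ij}, Z̄⟩` (the identity
`L_Y g = 2g + 2B_{Z̄}`); `Dω i j = ∇_i ω_j` for the one-form `ω = ι_Y G_{(q)}`, tied to the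
other data by the Leibniz rule `hLeibniz`.  `S2q` is the `2q`-th mean curvature and `Svec`
the normal-valued `(2q+1)`-th mean curvature.  The conclusion computes
`div_g ω = g^{ij} ∇_i ω_j`. -/
theorem div_lovelock_contraction_with_tangential_position (n q d : ℕ)
    (hq : 0 < q) (hqn : 2 * q < n) (hd : n < d)
    (g ginv : Matrix (Fin n) (Fin n) ℝ)
    (hgsym : ∀ i j, g i j = g j i)
    (hinv : ∀ i j, (∑ k, g i k * ginv k j) = if i = j then (1 : ℝ) else 0)
    (hinv' : ∀ i j, (∑ k, ginv i k * g k j) = if i = j then (1 : ℝ) else 0)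
    (W : Type) [NormedAddCommGroup W] [InnerProductSpace ℝ W]
    (Blow : Fin n → Fin n → W)
    (hBsym : ∀ i j, Blow i j = Blow j i)
    (Bm : Fin n → Fin n → W)
    (hBm : ∀ a b, Bm a b = ∑ c, ginv a c • Blow c b)
    (Zbar : W)
    (Rlow : Fin n → Fin n → Fin n → Fin n → ℝ)
    (hGauss : ∀ i j k l, Rlow i j k l = ⟪Blow i k, Blow j l⟫ - ⟪Blow i l, Blow j k⟫)
    (Rmix : Fin n → Fin n → Fin n → Fin n → ℝ)   -- Rmix a b c d = R_{ab}^{cd}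
    (hRmix : ∀ a b c d, Rmix a b c d = ∑ e, ∑ f, Rlow a b e f * ginv e c * ginv f d)
    (G : Matrix (Fin n) (Fin n) ℝ)
    (hG : ∀ i j, G i j = -(1 / 2 ^ (q + 1)) * ∑ k, g i k *
      ∑ a : Fin (2 * q) → Fin n, ∑ b : Fin (2 * q) → Fin n,
        gkd (Fin.cons k b : Fin (2 * q + 1) → Fin n) (Fin.cons j a) *
        ∏ s : Fin q, Rmix (b (pr1 s)) (b (pr2 s)) (a (pr1 s)) (a (pr2 s)))
    (DG : Fin n → Fin n → Fin n → ℝ)             -- DG k i j = ∇_k G_{(q)ij}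
    (hdivfree : ∀ j, (∑ i, ∑ k, ginv i k * DG i k j) = 0)
    (Yup : Fin n → ℝ)                            -- Y^l
    (DYup : Fin n → Fin n → ℝ)                   -- DYup i l = ∇_i Y^l
    (hLie : ∀ i j, (∑ m, g j m * DYup i m) + (∑ m, g i m * DYup j m)
      = 2 * g i j + 2 * ⟪Blow i j, Zbar⟫)
    (Dω : Fin n → Fin n → ℝ)                     -- Dω i j = ∇_i ω_j, ω = ι_Y G_{(q)}
    (hLeibniz : ∀ i j, Dω i j =
      (∑ l, DG i j l * Yup l) + ∑ l, G j l * DYup i l)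
    (S2q : ℝ)
    (hS2q : S2q = (1 / ((2 * q).factorial : ℝ)) *
      ∑ a : Fin (2 * q) → Fin n, ∑ b : Fin (2 * q) → Fin n,
        gkd b a * ∏ s : Fin q,
          ⟪Bm (a (pr1 s)) (b (pr1 s)), Bm (a (pr2 s)) (b (pr2 s))⟫)
    (Svec : W)
    (hSvec : Svec = (1 / ((2 * q + 1).factorial : ℝ)) •
      ∑ a : Fin (2 * q + 1) → Fin n, ∑ b : Fin (2 * q + 1) → Fin n,
        (gkd b a * ∏ s : Fin q,
            ⟪Bm (a (pr1 s).castSucc) (b (pr1 s).castSucc),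
              Bm (a (pr2 s).castSucc) (b (pr2 s).castSucc)⟫) •
          Bm (a (Fin.last (2 * q))) (b (Fin.last (2 * q)))) :
    -- div_g(ι_Y G_{(q)}) = −((2q)!/2)[(n−2q) S_{(2q)} + (2q+1)⟨S_{(2q+1)}, Z̄⟩]
    (∑ i, ∑ j, ginv i j * Dω i j)
      = -(((2 * q).factorial : ℝ) / 2) *
          (((n : ℝ) - 2 * q) * S2q + (2 * q + 1) * ⟪Svec, Zbar⟫) :=
  div_lovelock_contraction_with_tangential_position_general n q d g ginv hgsym hinv' W Blow hBsym Bm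
    hBm Zbar Rlow hGauss Rmix hRmix G hG DG hdivfree Yup DYup hLie Dω hLeibniz S2q hS2q Svec hSvec
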